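/- Let n, m be positive natural numbers and let 𝓔 : Matrix (Fin n) (Fin n) ℂ →ₗ[ℂ] Matrix (Fin m) (Fin m) ℂ be a linear map whose Choi matrix σ_𝓔 := ∑_{i,j} E_{ij} ⊗ 𝓔(E_{ij}) is positive semidefinite. Let r be the rank of σ_𝓔. Then r ≤ n·m and there exist matrices E_1, …, E_r ∈ Matrix (Fin m) (Fin n) ℂ such that 𝓔(A) = ∑_{i=1}^r E_i A E_i† for all A, and the Kraus operators are mutually orthogonal in the Hilbert–Schmidt inner product: trace(E_i† E_j) = 0 for i ≠ j. -/

import Mathlib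

/-!
Diagonalise the positive semidefinite Choi matrix as `σ = ∑ λₖ uₖ uₖᴴ` with orthonormal `uₖ`;
only the `rank σ` nonzero eigenvalues contribute. Reshaping the vectors `√λₖ uₖ` into `m × n`
matrices `Eₖ` gives a Kraus map whose Choi matrix is again `σ`, and a linear map is determined by
its Choi matrix. Since `trace (Eᵢᴴ Eⱼ) = ⟪vec Eᵢ, vec Eⱼ⟫`, the `Eₖ` inherit the orthogonality of
the eigenvectors.
-/

open Matrix Kronecker ComplexOrder

namespace Matrix

theorem mul_diagonal_mul_conjTranspose_eq_sum_vecMulVec {m n α : Type*} [Fintype n] [DecidableEq n]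
    [CommSemiring α] [StarRing α] (U : Matrix m n α) (d : n → α) :
    U * diagonal d * Uᴴ = ∑ k, d k • vecMulVec (Uᵀ k) (star (Uᵀ k)) := by
  ext i j
  rw [mul_apply]
  simp only [mul_diagonal, sum_apply, smul_apply, vecMulVec_apply, conjTranspose_apply,
    transpose_apply, Pi.star_apply, smul_eq_mul]
  exact Finset.sum_congr rfl fun k _ ↦ by ring

theorem IsHermitian.eq_sum_eigenvalues_smul_vecMulVec {𝕜 n : Type*} [RCLike 𝕜] [Fintype n]
    [DecidableEq n] {A : Matrix n n 𝕜} (hA : A.IsHermitian) :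
    A = ∑ k, (hA.eigenvalues k : 𝕜) •
      vecMulVec ⇑(hA.eigenvectorBasis k) (star ⇑(hA.eigenvectorBasis k)) := by
  conv_lhs => rw [hA.spectral_theorem, Unitary.conjStarAlgAut_apply, star_eq_conjTranspose,
    mul_diagonal_mul_conjTranspose_eq_sum_vecMulVec]
  simp [eigenvectorUnitary_transpose_apply]

theorem PosSemidef.exists_orthogonal_eq_sum_vecMulVec {𝕜 n : Type*} [RCLike 𝕜] [Fintype n]
    [DecidableEq n] {A : Matrix n n 𝕜} (hA : A.PosSemidef) :
    ∃ v : Fin A.rank → n → 𝕜, A = ∑ i, vecMulVec (v i) (star (v i)) ∧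
      Pairwise fun i j ↦ star (v i) ⬝ᵥ v j = 0 := by
  set hH := hA.isHermitian
  set u : n → n → 𝕜 := fun k ↦ ⇑(hH.eigenvectorBasis k)
  set w : n → n → 𝕜 := fun k ↦ (√(hH.eigenvalues k) : 𝕜) • u k
  have hw (k : n) : (hH.eigenvalues k : 𝕜) • vecMulVec (u k) (star (u k)) =
      vecMulVec (w k) (star (w k)) := by
    rw [star_smul, smul_vecMulVec, vecMulVec_smul, smul_smul, RCLike.star_def, RCLike.conj_ofReal,
      ← RCLike.ofReal_mul, Real.mul_self_sqrt (hA.eigenvalues_nonneg k)]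
  have horth {k l : n} (hkl : k ≠ l) : star (w k) ⬝ᵥ w l = 0 := by
    have huv : star (u k) ⬝ᵥ u l = 0 := by
      rw [dotProduct_comm]; exact hH.eigenvectorBasis.orthonormal.2 hkl
    simp only [w, star_smul, smul_dotProduct, dotProduct_smul, huv, smul_zero]
  have hsum : A = ∑ k : {k // hH.eigenvalues k ≠ 0}, vecMulVec (w k) (star (w k)) := by
    have hw_zero (k : {k // ¬hH.eigenvalues k ≠ 0}) : w k = 0 := by
      simp [w, not_not.mp k.2]
    calc A = ∑ k, (hH.eigenvalues k : 𝕜) • vecMulVec (u k) (star (u k)) :=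
          hH.eq_sum_eigenvalues_smul_vecMulVec
      _ = ∑ k, vecMulVec (w k) (star (w k)) := Finset.sum_congr rfl fun k _ ↦ hw k
      _ = _ := by
          rw [← Fintype.sum_subtype_add_sum_subtype (fun k ↦ hH.eigenvalues k ≠ 0)]
          simp [hw_zero]
  let e : Fin A.rank ≃ {k // hH.eigenvalues k ≠ 0} :=
    (Fintype.equivFinOfCardEq hH.rank_eq_card_non_zero_eigs.symm).symm
  refine ⟨fun i ↦ w (e i), ?_, fun i j hij ↦ horth fun h ↦ hij (e.injective (Subtype.ext h))⟩
  exact hsum.trans (e.sum_comp fun k ↦ vecMulVec (w k) (star (w k))).symm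

end Matrix

variable {R ι n m : Type*} [CommSemiring R] [Fintype n]

section Choi

variable [DecidableEq n]

def choiMatrix (𝓔 : Matrix n n R →ₗ[R] Matrix m m R) : Matrix (n × m) (n × m) R :=
  ∑ i, ∑ j, single i j 1 ⊗ₖ 𝓔 (single i j 1)

theorem choiMatrix_apply (𝓔 : Matrix n n R →ₗ[R] Matrix m m R) (i j : n) (a b : m) :
    choiMatrix 𝓔 (i, a) (j, b) = 𝓔 (single i j 1) a b := by
  simp [choiMatrix, Matrix.sum_apply, single_apply, ite_and]

theorem choiMatrix_injective :
    Function.Injective (choiMatrix : (Matrix n n R →ₗ[R] Matrix m m R) → _) := by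
  intro 𝓔 𝓕 h
  refine ext_linearMap R fun i j ↦ LinearMap.ext_ring <| Matrix.ext fun a b ↦ ?_
  simpa [choiMatrix_apply] using congrFun₂ h (i, a) (j, b)

end Choi

section Kraus

variable [StarRing R] [Fintype ι]

def krausMap (K : ι → Matrix m n R) : Matrix n n R →ₗ[R] Matrix m m R where
  toFun A := ∑ t, K t * A * (K t)ᴴ
  map_add' A B := by simp only [Matrix.mul_add, Matrix.add_mul, Finset.sum_add_distrib]
  map_smul' c A := by
    simp only [Matrix.mul_smul, Matrix.smul_mul, Finset.smul_sum, RingHom.id_apply]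

theorem krausMap_apply (K : ι → Matrix m n R) (A : Matrix n n R) :
    krausMap K A = ∑ t, K t * A * (K t)ᴴ := rfl

theorem choiMatrix_krausMap [DecidableEq n] (K : ι → Matrix m n R) :
    choiMatrix (krausMap K) = ∑ t, vecMulVec (vec (K t)) (star (vec (K t))) := by
  -- `vec (K t) (i, a) = K t a i`: column stacking matches the `n × m` indexing of the Choi matrix.
  ext ⟨i, a⟩ ⟨j, b⟩
  simp [choiMatrix_apply, krausMap_apply, Matrix.sum_apply, mul_apply, single_apply, vec, ite_and,
    vecMulVec_apply]

end Kraus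

theorem canonical_kraus_general (n m : ℕ)
    (𝓔 : Matrix (Fin n) (Fin n) ℂ →ₗ[ℂ] Matrix (Fin m) (Fin m) ℂ)
    (σ : Matrix (Fin n × Fin m) (Fin n × Fin m) ℂ)
    (hσ : σ = ∑ i : Fin n, ∑ j : Fin n,
      (Matrix.single i j (1 : ℂ)) ⊗ₖ 𝓔 (Matrix.single i j (1 : ℂ)))
    (hpsd : σ.PosSemidef) :
    σ.rank ≤ n * m ∧
    ∃ E : Fin σ.rank → Matrix (Fin m) (Fin n) ℂ,
      (∀ A, 𝓔 A = ∑ i, E i * A * (E i)ᴴ) ∧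
      (∀ i j, i ≠ j → ((E i)ᴴ * E j).trace = 0) := by
  refine ⟨by simpa using σ.rank_le_card_width, ?_⟩
  obtain ⟨v, hσv, horth⟩ := hpsd.exists_orthogonal_eq_sum_vecMulVec
  choose E hE using fun i ↦ vec_bijective.surjective (v i)
  have hkraus : 𝓔 = krausMap E := by
    apply choiMatrix_injective
    rw [choiMatrix_krausMap, show choiMatrix 𝓔 = σ from hσ.symm]
    simpa only [hE] using hσv
  refine ⟨E, fun A ↦ by rw [hkraus, krausMap_apply], fun i j hij ↦ ?_⟩
  rw [← star_vec_dotProduct_vec, hE, hE]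
  exact horth hij

/-- Canonical (minimal, orthogonal) Kraus form: if the Choi matrix of a linear map
`𝓔` is positive semidefinite, then its rank `r` satisfies `r ≤ n·m` and there is a
Kraus decomposition of `𝓔` with exactly `r` Kraus operators that are mutually
orthogonal in the Hilbert–Schmidt inner product. -/
theorem canonical_kraus (n m : ℕ) (hn : 0 < n) (hm : 0 < m)
    (𝓔 : Matrix (Fin n) (Fin n) ℂ →ₗ[ℂ] Matrix (Fin m) (Fin m) ℂ)
    (σ : Matrix (Fin n × Fin m) (Fin n × Fin m) ℂ)
    (hσ : σ = ∑ i : Fin n, ∑ j : Fin n,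
      (Matrix.single i j (1 : ℂ)) ⊗ₖ 𝓔 (Matrix.single i j (1 : ℂ)))
    (hpsd : σ.PosSemidef) :
    σ.rank ≤ n * m ∧
    ∃ E : Fin σ.rank → Matrix (Fin m) (Fin n) ℂ,
      (∀ A, 𝓔 A = ∑ i, E i * A * (E i)ᴴ) ∧
      (∀ i j, i ≠ j → ((E i)ᴴ * E j).trace = 0) :=
  canonical_kraus_general n m 𝓔 σ hσ hpsd
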